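/- arXiv:1611.05685 — 6 statements merged into one kernel-verified Lean document; each statement's English description precedes it below -/
import Mathlib

section
/- Let A be the adjacency matrix of the path graph A_n for n odd. Then the kernel of A over ℚ is one-dimensional. -/
open Matrix

private def pq : ℕ → ℚ := fun k => if k % 2 = 0 then (-1 : ℚ) ^ (k / 2) else 0

private lemma pq_zero : pq 0 = 1 := by simp [pq]

private lemma pq_odd {k : ℕ} (hk : k % 2 = 1) : pq k = 0 := by
  simp only [pq]; rw [if_neg (by omega)]

private lemma pq_two (k : ℕ) : pq (k + 2) = - pq k := by
  simp only [pq]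
  rcases Nat.mod_two_eq_zero_or_one k with h | h
  · rw [if_pos (by omega), if_pos h, show (k+2)/2 = k/2 + 1 by omega, pow_succ]; ring
  · rw [if_neg (by omega), if_neg (by omega)]; ring

private lemma mulVec_eq {n : ℕ} (A : Matrix (Fin n) (Fin n) ℚ)
    (hA : ∀ i j, A i j = if (i : ℕ) + 1 = (j : ℕ) ∨ (j : ℕ) + 1 = (i : ℕ) then 1 else 0)
    (v : Fin n → ℚ) (i : Fin n) :
    A.mulVec v i = (if h : (i : ℕ) + 1 < n then v ⟨(i : ℕ) + 1, h⟩ else 0)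
      + (if h : (i : ℕ) ≠ 0 then v ⟨(i : ℕ) - 1, lt_of_le_of_lt (Nat.sub_le _ _) i.2⟩ else 0) := by
  have key : ∀ j : Fin n, A i j * v j =
      (if ((i:ℕ)+1 = (j:ℕ)) then v j else 0) + (if ((j:ℕ)+1 = (i:ℕ)) then v j else 0) := by
    intro j
    rw [hA]
    split_ifs with h h1 h2 h3 h4 <;> simp_all <;> omega
  have hsum : A.mulVec v i =
      (∑ j : Fin n, if ((i:ℕ)+1 = (j:ℕ)) then v j else 0)
      + (∑ j : Fin n, if ((j:ℕ)+1 = (i:ℕ)) then v j else 0) := by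
    rw [← Finset.sum_add_distrib]
    simp only [Matrix.mulVec, dotProduct]
    exact Finset.sum_congr rfl fun j _ => key j
  rw [hsum]
  congr 1
  · by_cases h : (i : ℕ) + 1 < n
    · rw [dif_pos h]
      rw [Finset.sum_eq_single (⟨(i:ℕ)+1, h⟩ : Fin n)]
      · simp
      · intro j _ hj
        rw [if_neg]
        intro hc
        exact hj (Fin.ext hc.symm)
      · simp
    · rw [dif_neg h]
      apply Finset.sum_eq_zero
      intro j _
      rw [if_neg]
      omega
  · by_cases h : (i : ℕ) ≠ 0
    · rw [dif_pos h]
      rw [Finset.sum_eq_single (⟨(i:ℕ)-1, lt_of_le_of_lt (Nat.sub_le _ _) i.2⟩ : Fin n)]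
      · rw [if_pos (by show (i:ℕ) - 1 + 1 = i; omega)]
      · intro j _ hj
        rw [if_neg]
        intro hc
        apply hj
        apply Fin.ext
        show (j:ℕ) = (i:ℕ) - 1
        omega
      · simp
    · rw [dif_neg h]
      apply Finset.sum_eq_zero
      intro j _
      rw [if_neg]
      omega

theorem stmt_3 (n : ℕ) (hn : Odd n)
    (A : Matrix (Fin n) (Fin n) ℚ)
    (hA : ∀ i j, A i j = if (i : ℕ) + 1 = (j : ℕ) ∨ (j : ℕ) + 1 = (i : ℕ) then 1 else 0) :
    Module.finrank ℚ (LinearMap.ker A.mulVecLin) = 1 := by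
  obtain ⟨m, hm⟩ := hn
  have hn0 : 0 < n := by omega
  set w : Fin n → ℚ := fun i => pq (i : ℕ) with hw
  have hw0 : w ⟨0, hn0⟩ = 1 := pq_zero
  have hwker : A.mulVec w = 0 := by
    funext i
    rw [mulVec_eq A hA]
    show (if h : (i:ℕ)+1 < n then pq ((i:ℕ)+1) else 0)
        + (if h : (i:ℕ) ≠ 0 then pq ((i:ℕ)-1) else 0) = 0
    rcases Nat.mod_two_eq_zero_or_one (i : ℕ) with he | ho
    · have t1 : (if h : (i:ℕ)+1 < n then pq ((i:ℕ)+1) else 0) = 0 := by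
        split
        · exact pq_odd (by omega)
        · rfl
      have t2 : (if h : (i:ℕ) ≠ 0 then pq ((i:ℕ)-1) else 0) = 0 := by
        split
        · exact pq_odd (by omega)
        · rfl
      rw [t1, t2]; ring
    · have hi0 : (i:ℕ) ≠ 0 := by omega
      have hi1 : (i:ℕ) + 1 < n := by have := i.2; omega
      rw [dif_pos hi1, dif_pos hi0]
      rw [show (i:ℕ) + 1 = ((i:ℕ)-1) + 2 by omega, pq_two]
      ring
  have hwne : w ≠ 0 := by
    intro hc
    have := congrFun hc ⟨0, hn0⟩
    rw [hw0] at this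
    simp at this
  have hker : LinearMap.ker A.mulVecLin = Submodule.span ℚ {w} := by
    ext v
    rw [LinearMap.mem_ker, Submodule.mem_span_singleton, mulVecLin_apply]
    constructor
    · intro hv
      refine ⟨v ⟨0, hn0⟩, ?_⟩
      have eq0 : ∀ j : Fin n, (if h : (j:ℕ)+1 < n then v ⟨(j:ℕ)+1, h⟩ else 0)
          + (if h : (j:ℕ) ≠ 0 then v ⟨(j:ℕ)-1, lt_of_le_of_lt (Nat.sub_le _ _) j.2⟩ else 0) = 0 := by
        intro j
        rw [← mulVec_eq A hA, hv]
        rfl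
      have main : ∀ k, ∀ hk : k < n, v ⟨k, hk⟩ = v ⟨0, hn0⟩ * pq k := by
        intro k
        induction k using Nat.strong_induction_on with
        | _ k ih =>
          intro hk
          match k with
          | 0 => rw [pq_zero]; ring
          | 1 =>
            have h2 := eq0 ⟨0, hn0⟩
            rw [dif_pos (show (0:ℕ)+1 < n from hk), dif_neg (by simp)] at h2
            simp only [add_zero] at h2
            rw [show (⟨1, hk⟩ : Fin n) = ⟨0+1, hk⟩ from rfl, h2, pq_odd (by omega)]
            ring
          | (k+2) =>
            have hk1 : k + 1 < n := by omega
            have h2 := eq0 ⟨k+1, hk1⟩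
            rw [dif_pos (show (k+1)+1 < n from hk), dif_pos (by simp)] at h2
            have h3 : v ⟨k+1+1, hk⟩ = - v ⟨k+1-1, by omega⟩ := by linarith
            have hvk : v ⟨k, by omega⟩ = v ⟨0, hn0⟩ * pq k := ih k (by omega) (by omega)
            rw [show (⟨k+2, hk⟩ : Fin n) = ⟨k+1+1, hk⟩ from rfl, h3,
              show (⟨k+1-1, by omega⟩ : Fin n) = ⟨k, by omega⟩ from rfl, hvk, pq_two]
            ring
      funext i
      have := main i.val i.2
      rw [show (⟨(i:ℕ), i.2⟩ : Fin n) = i from rfl] at this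
      show v ⟨0, hn0⟩ * w i = v i
      rw [this]
    · rintro ⟨a, rfl⟩
      rw [Matrix.mulVec_smul, hwker]
      simp
  rw [hker]
  exact finrank_span_singleton hwne
end

section
/- Let X be an m×n real matrix and let T = [[I, X],[0, I]] · [[I, 0],[Xᵀ, I]] = [[I + XXᵀ, X],[Xᵀ, I]]. Then 1 is an eigenvalue of T if and only if the block matrix A = [[0, X],[Xᵀ, 0]] is singular. -/
open Matrix

theorem stmt_5 (m n : ℕ) (X : Matrix (Fin m) (Fin n) ℝ)
    (T : Matrix (Fin m ⊕ Fin n) (Fin m ⊕ Fin n) ℝ)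
    (hT : T = Matrix.fromBlocks 1 X 0 1 * Matrix.fromBlocks 1 0 Xᵀ 1)
    (A : Matrix (Fin m ⊕ Fin n) (Fin m ⊕ Fin n) ℝ)
    (hA : A = Matrix.fromBlocks 0 X Xᵀ 0) :
    (∃ v : Fin m ⊕ Fin n → ℝ, v ≠ 0 ∧ T.mulVec v = v) ↔ A.det = 0 := by
  have hB : T - 1 = Matrix.fromBlocks 1 X 0 1 * A := by
    subst hT hA
    rw [Matrix.fromBlocks_multiply, Matrix.fromBlocks_multiply]
    ext i j
    cases i <;> cases j <;>
      simp [Matrix.fromBlocks, Matrix.one_apply, Matrix.sub_apply]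
  have hdet : (T - 1).det = A.det := by
    rw [hB, Matrix.det_mul, Matrix.det_fromBlocks_zero₂₁]
    simp
  rw [← hdet, ← Matrix.exists_mulVec_eq_zero_iff]
  constructor
  · rintro ⟨v, hv, hTv⟩
    exact ⟨v, hv, by rw [Matrix.sub_mulVec, hTv, Matrix.one_mulVec, sub_self]⟩
  · rintro ⟨v, hv, hTv⟩
    refine ⟨v, hv, ?_⟩
    rw [Matrix.sub_mulVec, Matrix.one_mulVec, sub_eq_zero] at hTv
    exact hTv
end

section
/- The polynomial Θ₂(x₀,x₁) = x₀³x₁³ - 6x₀³x₁² - 6x₀²x₁³ + 8x₀³x₁ + 30x₀²x₁² + 8x₀x₁³ - 2x₀³ - 34x₀²x₁ - 34x₀x₁² - 2x₁³ + 8x₀² + 30x₀x₁ + 8x₁² - 6x₀ - 6x₁ + 1 is irreducible in ℚ[x₀,x₁]. -/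
/-!
View `Θ₂` as a cubic in `x₀` over `ℚ[x₁]`. Specialising `x₁ = 2` keeps the degree and gives
`-2x₀³ + 12x₀² - 18x₀ + 5`, which after the shift `x₀ ↦ x₀ + 1` is `-2x₀³ + 6x₀² - 3`, Eisenstein
at `3`, hence irreducible over `ℚ`. Since the specialisation preserves degrees of factors, a
factorisation over `ℚ[x₁]` must have a factor of `x₀`-degree `0`, i.e. a common divisor of all
coefficients. But `Θ₂(0, x₁)` and `Θ₂(2, x₁)` are coprime, so `Θ₂` is primitive and that factor
is a unit.
-/

namespace Polynomial

variable {R S : Type*} [CommRing R] [CommRing S] [IsDomain S] {φ : R →+* S}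

theorem isPrimitive_of_isCoprime_eval {f : R[X]} {a b : R}
    (h : IsCoprime (f.eval a) (f.eval b)) : f.IsPrimitive :=
  isPrimitive_iff_isUnit_of_C_dvd.mpr fun r hr =>
    h.isUnit_of_dvd' (by simpa using eval_dvd (x := a) hr) (by simpa using eval_dvd (x := b) hr)

theorem IsPrimitive.isUnit_of_isUnit_map {f : R[X]} (hf : f.IsPrimitive)
    (hdeg : (f.map φ).natDegree = f.natDegree) (hu : IsUnit (f.map φ)) : IsUnit f := by
  have hf0 : f.natDegree = 0 := hdeg ▸ natDegree_eq_zero_of_isUnit hu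
  rw [eq_C_of_natDegree_eq_zero hf0] at hf ⊢
  exact isUnit_C.mpr (isPrimitive_iff_isUnit_of_C_dvd.mp hf _ dvd_rfl)

variable [IsDomain R]

theorem natDegree_map_eq_of_dvd {f a : R[X]} (hf0 : f.map φ ≠ 0)
    (hdeg : (f.map φ).natDegree = f.natDegree) (hdvd : a ∣ f) :
    (a.map φ).natDegree = a.natDegree := by
  obtain ⟨b, rfl⟩ := hdvd
  rw [Polynomial.map_mul] at hf0 hdeg
  have ha : a ≠ 0 := fun h => by simp [h] at hf0
  have hb : b ≠ 0 := fun h => by simp [h] at hf0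
  rw [natDegree_mul (left_ne_zero_of_mul hf0) (right_ne_zero_of_mul hf0),
    natDegree_mul ha hb] at hdeg
  have := natDegree_map_le (f := φ) (p := b)
  exact le_antisymm natDegree_map_le (by omega)

theorem IsPrimitive.irreducible_of_irreducible_map_of_natDegree_eq {f : R[X]}
    (hf : f.IsPrimitive) (hdeg : (f.map φ).natDegree = f.natDegree)
    (h_irr : Irreducible (f.map φ)) : Irreducible f := by
  refine ⟨fun h => h_irr.not_isUnit (h.map (mapRingHom φ)), fun a b h => ?_⟩
  have isUnit_of_dvd {c : R[X]} (hc : c ∣ f) (hu : IsUnit (c.map φ)) : IsUnit c :=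
    (isPrimitive_of_dvd hf hc).isUnit_of_isUnit_map
      (natDegree_map_eq_of_dvd h_irr.ne_zero hdeg hc) hu
  exact (h_irr.isUnit_or_isUnit (by rw [h, Polynomial.map_mul])).imp
    (isUnit_of_dvd (Dvd.intro _ h.symm)) (isUnit_of_dvd (Dvd.intro_left _ h.symm))

end Polynomial

def theta2 {A : Type*} [CommRing A] (x₀ x₁ : A) : A :=
  x₀^3*x₁^3 - 6*x₀^3*x₁^2 - 6*x₀^2*x₁^3 + 8*x₀^3*x₁ + 30*x₀^2*x₁^2
    + 8*x₀*x₁^3 - 2*x₀^3 - 34*x₀^2*x₁ - 34*x₀*x₁^2 - 2*x₁^3 + 8*x₀^2 + 30*x₀*x₁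
    + 8*x₁^2 - 6*x₀ - 6*x₁ + 1

theorem map_theta2 {A B F : Type*} [CommRing A] [CommRing B] [FunLike F A B]
    [RingHomClass F A B] (g : F) (x₀ x₁ : A) : g (theta2 x₀ x₁) = theta2 (g x₀) (g x₁) := by
  simp only [theta2, map_add, map_sub, map_mul, map_pow, map_ofNat, map_one]

section

open Polynomial

theorem irreducible_cubic_rat : Irreducible (-2*X^3 + 6*X^2 - 3 : ℚ[X]) := by
  have hprim : (-2*X^3 + 6*X^2 - 3 : ℤ[X]).IsPrimitive :=
    isPrimitive_of_isCoprime_eval (a := 0) (b := 1) (by norm_num)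
  have hdeg : (-2*X^3 + 6*X^2 - 3 : ℤ[X]).degree = 3 := by compute_degree!
  have hirr_int : Irreducible (-2*X^3 + 6*X^2 - 3 : ℤ[X]) := by
    refine irreducible_of_eisenstein_criterion
      ((Ideal.span_singleton_prime (by norm_num)).mpr Int.prime_three) ?_ ?_ ?_ ?_ hprim
    · rw [leadingCoeff, natDegree_eq_of_degree_eq_some hdeg, Ideal.mem_span_singleton]
      simp [coeff_X_pow]
    · intro n hn
      rw [hdeg] at hn
      have hn3 : n < 3 := by exact_mod_cast hn
      rw [Ideal.mem_span_singleton]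
      interval_cases n <;> simp [coeff_X_pow]
    · rw [hdeg]; decide
    · rw [Ideal.span_singleton_pow, Ideal.mem_span_singleton]
      simp [coeff_X_pow]
  simpa using (IsPrimitive.Int.irreducible_iff_irreducible_map_cast hprim).mp hirr_int

theorem irreducible_theta2_X_two : Irreducible (theta2 (X : ℚ[X]) 2) := by
  rw [← MulEquiv.irreducible_iff (taylorEquiv (1 : ℚ)), map_theta2]
  convert irreducible_cubic_rat using 1
  rw [show taylorEquiv (1 : ℚ) X = X + C 1 from taylor_X 1, map_ofNat (taylorEquiv (1 : ℚ)) 2,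
    C_1]
  unfold theta2
  ring

theorem irreducible_theta2_X_C {A : Type*} [CommRing A] [IsDomain A] [Algebra ℚ A]
    (φ : A →+* ℚ) (t : A) (ht : φ t = 2) : Irreducible (theta2 (X : A[X]) (C t)) := by
  have hcoprime : IsCoprime (theta2 0 t) (theta2 2 t) := by
    refine ⟨algebraMap ℚ A (1/2) * (-13 + 11*t - 2*t^2),
      algebraMap ℚ A (1/2) * (3 - 7*t + 2*t^2), ?_⟩
    have h2 : algebraMap ℚ A (1/2) * 2 = 1 := by
      rw [← map_ofNat (algebraMap ℚ A) 2, ← map_mul]; norm_num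
    unfold theta2
    linear_combination h2
  have hprim : (theta2 (X : A[X]) (C t)).IsPrimitive := by
    refine isPrimitive_of_isCoprime_eval (a := 0) (b := 2) ?_
    rw [← coe_evalRingHom, ← coe_evalRingHom, map_theta2, map_theta2]
    simpa using hcoprime
  have hmap : (theta2 (X : A[X]) (C t)).map φ = theta2 X 2 := by
    rw [← coe_mapRingHom, map_theta2]
    simp [ht, C_ofNat]
  have hdeg_le : (theta2 (X : A[X]) (C t)).natDegree ≤ 3 := by
    unfold theta2; compute_degree
  have hdeg_map : (theta2 (X : ℚ[X]) 2).natDegree = 3 := by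
    unfold theta2; compute_degree!
  have hirr : Irreducible ((theta2 (X : A[X]) (C t)).map φ) := by
    rw [hmap]; exact irreducible_theta2_X_two
  refine hprim.irreducible_of_irreducible_map_of_natDegree_eq ?_ hirr
  have hle := natDegree_map_le (f := φ) (p := theta2 (X : A[X]) (C t))
  rw [hmap, hdeg_map] at hle ⊢
  omega

end

open MvPolynomial

theorem stmt_8
    (x₀ x₁ : MvPolynomial (Fin 2) ℚ) (h0 : x₀ = X 0) (h1 : x₁ = X 1) :
    Irreducible (x₀^3*x₁^3 - 6*x₀^3*x₁^2 - 6*x₀^2*x₁^3 + 8*x₀^3*x₁ + 30*x₀^2*x₁^2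
      + 8*x₀*x₁^3 - 2*x₀^3 - 34*x₀^2*x₁ - 34*x₀*x₁^2 - 2*x₁^3 + 8*x₀^2 + 30*x₀*x₁
      + 8*x₁^2 - 6*x₀ - 6*x₁ + 1) := by
  subst h0 h1
  change Irreducible (theta2 (X 0) (X (Fin.succ 0)))
  rw [← MulEquiv.irreducible_iff (finSuccEquiv ℚ 1), map_theta2, finSuccEquiv_X_zero,
    finSuccEquiv_X_succ]
  exact irreducible_theta2_X_C (eval fun _ => 2) (X 0) (eval_X ..)
end

section
/- The polynomials Θ₁(x₀,x₁) = (x₁² - 3x₁ + 1)(x₀x₁³ - 7x₀x₁² - 2x₁³ + 9x₀x₁ + 9x₁² - 2x₀ + 7x₁ + 1) and Θ₂(x₀,x₁) = x₀³x₁³ - 6x₀³x₁² - 6x₀²x₁³ + 8x₀³x₁ + 30x₀²x₁² + 8x₀x₁³ - 2x₀³ - 34x₀²x₁ - 34x₀x₁² - 2x₁³ + 8x₀² + 30x₀x₁ + 8x₁² - 6x₀ - 6x₁ + 1 are not equal up to multiplication by a unit monomial ±x₀ᵃx₁ᵇ; indeed no polynomial of the form ±x₀ᵃx₁ᵇΘ₁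 equals Θ₂. -/
open MvPolynomial

theorem stmt_9
    (x₀ x₁ Θ₁ Θ₂ : MvPolynomial (Fin 2) ℤ) (h0 : x₀ = X 0) (h1 : x₁ = X 1)
    (hΘ₁ : Θ₁ = (x₁^2 - 3*x₁ + 1) *
      (x₀*x₁^3 - 7*x₀*x₁^2 - 2*x₁^3 + 9*x₀*x₁ + 9*x₁^2 - 2*x₀ + 7*x₁ + 1))
    (hΘ₂ : Θ₂ = x₀^3*x₁^3 - 6*x₀^3*x₁^2 - 6*x₀^2*x₁^3 + 8*x₀^3*x₁ + 30*x₀^2*x₁^2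
      + 8*x₀*x₁^3 - 2*x₀^3 - 34*x₀^2*x₁ - 34*x₀*x₁^2 - 2*x₁^3 + 8*x₀^2 + 30*x₀*x₁
      + 8*x₁^2 - 6*x₀ - 6*x₁ + 1) :
    ∀ (s : ℤ) (a b c d : ℕ), (s = 1 ∨ s = -1) →
      C s * x₀^a * x₁^b * Θ₁ ≠ x₀^c * x₁^d * Θ₂ := by
  intro s a b c d hs h
  apply_fun eval (fun _ => (1 : ℤ)) at h
  simp [hΘ₁, hΘ₂, h0, h1] at h
  rcases hs with rfl | rfl <;> omega
end

section
/- Let X be the block matrix T = [[I + XXᵀ, X],[Xᵀ, I]] for an m×n real matrix X. Then the characteristic polynomial of T satisfies det(tI_{m+n} - T) = det((t-1)²I_n - t XᵀX) · (t-1)^{m-n} when m ≥ n. -/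
/-!
Left-multiplying `t • 1 - T` by the block upper triangular matrix `[[(t - 1) • 1, X], [0, 1]]`
clears its upper right block, so `(t - 1)^m * det (t • 1 - T) = (t - 1)^n * det ((t - 1)^2 • 1 - t • X Xᵀ)`.
Sylvester's identity `det (c • 1 - A B) = c^(m - n) * det (c • 1 - B A)` passes from `X Xᵀ` to `Xᵀ X`,
and cancelling `(t - 1)^m` proves the claim for `t ≠ 1`; both sides are continuous in `t`.
-/

open Matrix

namespace Matrix

variable {R : Type*} [CommRing R] {m n : Type*} [Fintype m] [Fintype n] [DecidableEq m]
  [DecidableEq n]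

theorem det_smul_one_sub_mul_of_card_le (A : Matrix m n R) (B : Matrix n m R) (c : R)
    (h : Fintype.card n ≤ Fintype.card m) :
    (c • 1 - A * B).det = c ^ (Fintype.card m - Fintype.card n) * (c • 1 - B * A).det := by
  simpa [eval_charpoly, smul_one_eq_diagonal] using
    congrArg (Polynomial.eval c) (charpoly_mul_comm_of_le A B h)

theorem det_smul_one_sub_fromBlocks_one_add_mul (t : R) (A : Matrix m n R) (B : Matrix n m R) :
    (t - 1) ^ Fintype.card m * (t • 1 - fromBlocks (1 + A * B) A B 1).det =
      (t - 1) ^ Fintype.card n * ((t - 1) ^ 2 • 1 - t • (A * B)).det := by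
  have hsub : t • 1 - fromBlocks (1 + A * B) A B 1 =
      fromBlocks ((t - 1) • 1 - A * B) (-A) (-B) ((t - 1) • (1 : Matrix n n R)) := by
    rw [← fromBlocks_one, fromBlocks_smul, sub_eq_add_neg, fromBlocks_neg, fromBlocks_add]
    congr 1 <;> module
  have hreduce : fromBlocks ((t - 1) • 1) A 0 1 * (t • 1 - fromBlocks (1 + A * B) A B 1) =
      fromBlocks ((t - 1) ^ 2 • 1 - t • (A * B)) 0 (-B) ((t - 1) • 1) := by
    rw [hsub, fromBlocks_multiply]
    congr 1 <;> simp only [Matrix.mul_smul, Matrix.smul_mul, Matrix.mul_neg, Matrix.mul_one,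
      Matrix.one_mul, Matrix.zero_mul, Matrix.mul_sub, smul_smul] <;> module
  have hdet := congrArg det hreduce
  rw [det_mul, det_fromBlocks_zero₂₁, det_fromBlocks_zero₁₂, det_one, mul_one, det_smul,
    det_one, mul_one, det_smul, det_one, mul_one] at hdet
  linear_combination hdet

theorem det_smul_one_sub_fromBlocks_one_add_mul_of_ne_one [IsDomain R] (A : Matrix m n R)
    (B : Matrix n m R) (h : Fintype.card n ≤ Fintype.card m) {t : R} (ht : t ≠ 1) :
    (t • 1 - fromBlocks (1 + A * B) A B 1).det =
      ((t - 1) ^ 2 • 1 - t • (B * A)).det * (t - 1) ^ (Fintype.card m - Fintype.card n) := by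
  have hreduce := det_smul_one_sub_fromBlocks_one_add_mul t A B
  rw [← smul_mul, det_smul_one_sub_mul_of_card_le _ _ _ h, Matrix.mul_smul] at hreduce
  have hpow : (t - 1) ^ Fintype.card n * ((t - 1) ^ 2) ^ (Fintype.card m - Fintype.card n) =
      (t - 1) ^ Fintype.card m * (t - 1) ^ (Fintype.card m - Fintype.card n) := by
    rw [← pow_mul, ← pow_add, ← pow_add]
    congr 1
    omega
  rw [← mul_assoc, hpow, mul_assoc] at hreduce
  rw [mul_left_cancel₀ (pow_ne_zero _ (sub_ne_zero.mpr ht)) hreduce, mul_comm]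

end Matrix

theorem stmt_10 (m n : ℕ) (hmn : m ≥ n) (X : Matrix (Fin m) (Fin n) ℝ)
    (T : Matrix (Fin m ⊕ Fin n) (Fin m ⊕ Fin n) ℝ)
    (hT : T = Matrix.fromBlocks (1 + X * Xᵀ) X Xᵀ 1) :
    ∀ t : ℝ,
      (t • (1 : Matrix (Fin m ⊕ Fin n) (Fin m ⊕ Fin n) ℝ) - T).det =
        ((t - 1)^2 • (1 : Matrix (Fin n) (Fin n) ℝ) - t • (Xᵀ * X)).det * (t - 1)^(m - n) := by
  subst hT
  have hcard : Fintype.card (Fin n) ≤ Fintype.card (Fin m) := by simpa using hmn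
  have hne_one (t : ℝ) (ht : t ∈ ({1}ᶜ : Set ℝ)) :
      (t • 1 - fromBlocks (1 + X * Xᵀ) X Xᵀ 1).det =
        ((t - 1) ^ 2 • 1 - t • (Xᵀ * X)).det * (t - 1) ^ (m - n) := by
    simpa using det_smul_one_sub_fromBlocks_one_add_mul_of_ne_one X Xᵀ hcard ht
  exact congrFun (Continuous.ext_on (dense_compl_singleton 1) (by fun_prop) (by fun_prop) hne_one)
end

section
/- For the 8×8 matrices U, W, V of the A₅ example with x₀ = 1, the product T_a T_b = (UW)(V) has spectral radius equal to the largest root of det(xI - T_aT_b), and this characteristic polynomial, divided by det(xI - I₄) appropriately, specializes the Teichmüller polynomial: Θ_{A₅}(1, x) = x⁴ - 8x³ + 17x² - 8x + 1 divided appropriately equals the specialization at x₀=1. Concretely: det(xI₈ - T_aT_b)/(x-1)⁴ = x⁴ - 8x³ + 17x² - 8x + 1 where T_a and T_b are the explicit 8×8 matrices given in the paper. -/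
open Matrix

def TaMat : Matrix (Fin 8) (Fin 8) ℝ :=
  !![1, 0, 0, 0, 1, 0, 0, 0;
     0, 1, 0, 0, 0, 1, 1, 0;
     0, 0, 1, 0, 0, 1, 1, 0;
     0, 0, 0, 1, 0, 0, 0, 1;
     0, 0, 0, 0, 1, 0, 0, 0;
     0, 0, 0, 0, 0, 1, 0, 0;
     0, 0, 0, 0, 0, 0, 1, 0;
     0, 0, 0, 0, 0, 0, 0, 1]

def TbMat : Matrix (Fin 8) (Fin 8) ℝ :=
  !![1, 0, 0, 0, 0, 0, 0, 0;
     0, 1, 0, 0, 0, 0, 0, 0;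
     0, 0, 1, 0, 0, 0, 0, 0;
     0, 0, 0, 1, 0, 0, 0, 0;
     1, 1, 0, 0, 1, 0, 0, 0;
     1, 1, 0, 0, 0, 1, 0, 0;
     0, 0, 1, 1, 0, 0, 1, 0;
     0, 0, 1, 1, 0, 0, 0, 1]


/-!
In the splitting of the eight edges into the first and last four, `T_a` and `T_b` are block
unipotent, `[[1, P], [0, 1]]` and `[[1, 0], [Q, 1]]`. For `x ≠ 1` the Schur complement of the
scalar block `(x - 1) • 1` of `x • 1 - T_a T_b` gives
`det (x • 1 - T_a T_b) = det ((x - 1) ^ 2 • 1 - x • P Q)`, and by continuity this holds at `x = 1`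
too. What is left is a `4 × 4` determinant.
-/

section

variable {n : Type*} [Fintype n] [DecidableEq n]

lemma det_smul_one_sub_fromBlocks_mul_of_ne (P Q : Matrix n n ℝ) {x : ℝ} (hx : x ≠ 1) :
    det (x • 1 - fromBlocks 1 P 0 1 * fromBlocks 1 0 Q 1) =
      det ((x - 1) ^ 2 • 1 - x • (P * Q)) := by
  have hy : x - 1 ≠ 0 := sub_ne_zero.mpr hx
  have hD : (x - 1) • (1 : Matrix n n ℝ) * ((x - 1)⁻¹ • 1) = 1 := by simp [smul_smul, hy]
  have : Invertible ((x - 1) • (1 : Matrix n n ℝ)) := invertibleOfRightInverse _ _ hD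
  have hblocks : x • 1 - fromBlocks 1 P 0 1 * fromBlocks 1 0 Q 1 =
      fromBlocks ((x - 1) • 1 - P * Q) (-P) (-Q) ((x - 1) • (1 : Matrix n n ℝ)) := by
    rw [fromBlocks_multiply]
    ext (i | i) (j | j) <;> simp [one_apply, sub_smul, sub_sub]
  rw [hblocks, det_fromBlocks₂₂, invOf_eq_right_inv hD, det_smul, det_one, mul_one, ← det_smul]
  congr 1
  rw [Matrix.mul_smul, mul_one, Matrix.smul_mul, neg_mul_neg, smul_sub, smul_smul,
    mul_inv_cancel₀ hy, one_smul]
  module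

lemma det_smul_one_sub_fromBlocks_mul (P Q : Matrix n n ℝ) (x : ℝ) :
    det (x • 1 - fromBlocks 1 P 0 1 * fromBlocks 1 0 Q 1) =
      det ((x - 1) ^ 2 • 1 - x • (P * Q)) := by
  refine congrFun (Continuous.ext_on (dense_compl_singleton 1) ?_ ?_
    fun y hy => det_smul_one_sub_fromBlocks_mul_of_ne P Q hy) x <;> fun_prop

end

def TaBlock : Matrix (Fin 4) (Fin 4) ℝ := !![1, 0, 0, 0; 0, 1, 1, 0; 0, 1, 1, 0; 0, 0, 0, 1]

def TbBlock : Matrix (Fin 4) (Fin 4) ℝ := !![1, 1, 0, 0; 1, 1, 0, 0; 0, 0, 1, 1; 0, 0, 1, 1]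

lemma TaMat_eq_reindex_fromBlocks :
    TaMat = reindexAlgEquiv ℝ ℝ finSumFinEquiv (fromBlocks 1 TaBlock 0 1) := by
  ext i j; fin_cases i <;> fin_cases j <;> rfl

lemma TbMat_eq_reindex_fromBlocks :
    TbMat = reindexAlgEquiv ℝ ℝ finSumFinEquiv (fromBlocks 1 0 TbBlock 1) := by
  ext i j; fin_cases i <;> fin_cases j <;> rfl

lemma TaBlock_mul_TbBlock :
    TaBlock * TbBlock = !![1, 1, 0, 0; 1, 1, 1, 1; 1, 1, 1, 1; 0, 0, 1, 1] := by
  ext i j; fin_cases i <;> fin_cases j <;> simp [TaBlock, TbBlock, mul_apply, Fin.sum_univ_four]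

lemma det_sq_smul_one_sub_smul_TaBlock_mul_TbBlock (x : ℝ) :
    det ((x - 1) ^ 2 • 1 - x • (TaBlock * TbBlock)) =
      (x - 1) ^ 4 * (x ^ 4 - 8 * x ^ 3 + 17 * x ^ 2 - 8 * x + 1) := by
  rw [TaBlock_mul_TbBlock]
  simp [det_succ_row_zero, Fin.sum_univ_succ, Fin.succAbove, one_apply]
  ring

theorem stmt_14 :
    ∀ x : ℝ,
      (x • (1 : Matrix (Fin 8) (Fin 8) ℝ) - TaMat * TbMat).det =
        (x - 1)^4 * (x^4 - 8*x^3 + 17*x^2 - 8*x + 1) := by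
  intro x
  rw [TaMat_eq_reindex_fromBlocks, TbMat_eq_reindex_fromBlocks, ← map_mul,
    ← map_one (reindexAlgEquiv ℝ ℝ (finSumFinEquiv (m := 4) (n := 4))), ← map_smul, ← map_sub, det_reindexAlgEquiv,
    det_smul_one_sub_fromBlocks_mul, det_sq_smul_one_sub_smul_TaBlock_mul_TbBlock]
end
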